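/- arXiv:1201.3984 — 2 statements merged into one kernel-verified Lean document; each statement's English description precedes it below -/
import Mathlib

section
/- For every finite simple graph G, the c-rank of G equals the height of the lattice of flats of G. -/
/-!
Flats are exactly the closed sets of the Galois connection `W ↦ St(W)`, i.e. `St(St X) = X`.
Given a strictly increasing chain of flats `X₀ ⊂ ⋯ ⊂ X_k`, pick `a_t ∈ X_{t+1} \ X_t`;
closedness of `X_t` gives `b_t ∈ St(X_t)` not adjacent to `a_t`, and `b_s` is adjacent to every
`a_r` with `r < s` because `a_r ∈ X_{r+1} ⊆ X_s`. So `(a, b)` indexes a lower unitriangular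
submatrix of `A^c`. Conversely, for such a submatrix with columns `j_0, …, j_{n-1}`, the flats
`St{j_s | s ≥ t}` increase strictly in `t`, the row `i_t` lying in the `(t+1)`-st but not the `t`-th.
-/

/-- `St(W)`: the set of vertices adjacent to every vertex of `W` (so `St(∅) = V`). -/
def starW {V : Type*} (G : SimpleGraph V) (W : Set V) : Set V := {v | ∀ w ∈ W, G.Adj v w}

/-- The flats of `G`: all sets of the form `St(W)`, `W ⊆ V`. -/
def flats {V : Type*} (G : SimpleGraph V) : Set (Set V) := {X | ∃ W : Set V, X = starW G W}

/-- Height of a family of sets: the largest `k` admitting a strictly decreasing chain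
`X₀ ⊃ X₁ ⊃ … ⊃ X_k` inside the family. -/
noncomputable def heightOf {V : Type*} (F : Set (Set V)) : ℕ :=
  sSup {k | ∃ c : Fin (k + 1) → Set V, StrictAnti c ∧ ∀ i, c i ∈ F}

/-- The c-rank of a graph: the height of its lattice of flats. -/
noncomputable def crk {V : Type*} (G : SimpleGraph V) : ℕ := heightOf (flats G)

/-- `J` has a witness in `A_G^c`: there is an equal-size row set such that the corresponding
submatrix of the complemented adjacency matrix can be put in lower unitriangular form
(1's on the diagonal, 0's above) by independently permuting rows and columns. -/
def hasWitness {V : Type*} (G : SimpleGraph V) (J : Finset V) : Prop :=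
  ∃ i : Fin J.card → V, ∃ j : Fin J.card → V,
    Function.Injective i ∧ Function.Injective j ∧ (∀ r, j r ∈ J) ∧
    (∀ r, ¬ G.Adj (i r) (j r)) ∧ (∀ r s, r < s → G.Adj (i r) (j s))

/-- The c-rank of `G` defined via witnesses: maximum size of a vertex subset with a witness. -/
noncomputable def crkW {V : Type*} (G : SimpleGraph V) : ℕ :=
  sSup {k | ∃ J : Finset V, J.card = k ∧ hasWitness G J}

open Finset

lemma exists_strictAnti_iff_exists_strictMono {α : Type*} [Preorder α] (F : Set α) (k : ℕ) :
    (∃ c : Fin (k + 1) → α, StrictAnti c ∧ ∀ t, c t ∈ F) ↔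
      ∃ c : Fin (k + 1) → α, StrictMono c ∧ ∀ t, c t ∈ F := by
  constructor
  · rintro ⟨c, hc, hF⟩
    exact ⟨c ∘ Fin.rev, hc.comp Fin.rev_strictAnti, fun t => hF _⟩
  · rintro ⟨c, hc, hF⟩
    exact ⟨c ∘ Fin.rev, hc.comp_strictAnti Fin.rev_strictAnti, fun t => hF _⟩

section

variable {V : Type*} (G : SimpleGraph V)

lemma starW_antitone : Antitone (starW G) :=
  fun _ _ h _ hv w hw => hv w (h hw)

lemma subset_starW_starW (W : Set V) : W ⊆ starW G (starW G W) :=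
  fun w hw _ hv => (hv w hw).symm

lemma starW_starW_starW (W : Set V) : starW G (starW G (starW G W)) = starW G W :=
  (starW_antitone G (subset_starW_starW G W)).antisymm (subset_starW_starW G _)

/-- Rows `i` and columns `j` on which `A^c` is lower unitriangular. -/
def IsTriangular {n : ℕ} (i j : Fin n → V) : Prop :=
  (∀ r, ¬ G.Adj (i r) (j r)) ∧ ∀ r s, r < s → G.Adj (i r) (j s)

variable {G}

lemma starW_starW_of_mem_flats {X : Set V} (hX : X ∈ flats G) : starW G (starW G X) = X := by
  obtain ⟨W, rfl⟩ := hX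
  exact starW_starW_starW G W

namespace IsTriangular

variable {n : ℕ} {i j : Fin n → V}

lemma injective_left (h : IsTriangular G i j) : Function.Injective i := by
  intro r s hrs
  by_contra hne
  rcases lt_or_gt_of_ne hne with hlt | hlt
  · exact h.1 s (hrs ▸ h.2 r s hlt)
  · exact h.1 r (hrs ▸ h.2 s r hlt)

lemma injective_right (h : IsTriangular G i j) : Function.Injective j := by
  intro r s hrs
  by_contra hne
  rcases lt_or_gt_of_ne hne with hlt | hlt
  · exact h.1 r (hrs ▸ h.2 r s hlt)
  · exact h.1 s (hrs ▸ h.2 s r hlt)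

lemma comp {m : ℕ} (h : IsTriangular G i j) {e : Fin m → Fin n} (he : StrictMono e) :
    IsTriangular G (i ∘ e) (j ∘ e) :=
  ⟨fun r => h.1 (e r), fun _ _ hrs => h.2 _ _ (he hrs)⟩

lemma exists_hasWitness (h : IsTriangular G i j) : ∃ J : Finset V, J.card = n ∧ hasWitness G J := by
  classical
  have hcard : (univ.image j).card = n := by
    rw [card_image_of_injective _ h.injective_right, card_univ, Fintype.card_fin]
  have hcomp : IsTriangular G (i ∘ Fin.cast hcard) (j ∘ Fin.cast hcard) :=
    h.comp fun _ _ hrs => hrs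
  exact ⟨_, hcard, _, _, hcomp.injective_left, hcomp.injective_right,
    fun r => mem_image_of_mem j (mem_univ _), hcomp⟩

lemma strictMono_starW (h : IsTriangular G i j) :
    StrictMono fun t : Fin (n + 1) => starW G (j '' {s | (t : ℕ) ≤ s}) := by
  intro t t' htt'
  have htn : (t : ℕ) < n := lt_of_lt_of_le htt' (Nat.lt_succ_iff.mp t'.isLt)
  have hle : j '' {s | (t' : ℕ) ≤ s} ⊆ j '' {s | (t : ℕ) ≤ s} :=
    Set.image_mono fun s hs => (show (t : ℕ) ≤ t' from htt'.le).trans hs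
  refine ssubset_of_subset_not_subset (starW_antitone G hle) fun hsub => ?_
  have hin : i ⟨t, htn⟩ ∈ starW G (j '' {s | (t' : ℕ) ≤ s}) := by
    rintro _ ⟨s, hs, rfl⟩
    exact h.2 _ _ (Nat.lt_of_lt_of_le htt' hs)
  exact h.1 ⟨t, htn⟩ (hsub hin _ ⟨_, Nat.le_refl _, rfl⟩)

end IsTriangular

lemma exists_isTriangular_of_strictMono_flats {k : ℕ} {c : Fin (k + 1) → Set V}
    (hc : StrictMono c) (hflat : ∀ t, c t ∈ flats G) :
    ∃ a b : Fin k → V, IsTriangular G a b := by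
  have hnew : ∀ t : Fin k, ∃ x ∈ c t.succ, x ∉ c t.castSucc := fun t =>
    Set.exists_of_ssubset (hc t.castSucc_lt_succ)
  choose a ha_mem ha_not_mem using hnew
  have hsep : ∀ t : Fin k, ∃ w ∈ starW G (c t.castSucc), ¬ G.Adj (a t) w := by
    intro t
    by_contra! hadj
    exact ha_not_mem t (starW_starW_of_mem_flats (hflat _) ▸ hadj)
  choose b hb_mem hb_not_adj using hsep
  refine ⟨a, b, hb_not_adj, fun r s hrs => (hb_mem s (a r) ?_).symm⟩
  exact hc.monotone (Fin.succ_le_castSucc_iff.mpr hrs) (ha_mem r)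

end

theorem crkW_eq_height_flats_general {V : Type*} (G : SimpleGraph V) :
    crkW G = heightOf (flats G) := by
  unfold crkW heightOf
  congr 1
  ext k
  rw [Set.mem_ofPred_eq, Set.mem_ofPred_eq, exists_strictAnti_iff_exists_strictMono]
  constructor
  · rintro ⟨J, rfl, i, j, -, -, -, hij⟩
    exact ⟨_, IsTriangular.strictMono_starW hij, fun t => ⟨_, rfl⟩⟩
  · rintro ⟨c, hc, hflat⟩
    obtain ⟨a, b, hab⟩ := exists_isTriangular_of_strictMono_flats hc hflat
    exact hab.exists_hasWitness

/-- For every finite simple graph `G`, the c-rank of `G` (maximum size of a vertex subset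
admitting a witness in `A^c`) equals the height of the lattice of flats of `G`. -/
theorem crkW_eq_height_flats {V : Type*} [Fintype V] (G : SimpleGraph V) :
    crkW G = heightOf (flats G) :=
  crkW_eq_height_flats_general G
end

section
/- For a finite simple graph G, c-rk(G) ≥ 4 if and only if G contains a 4-cycle v₁ — v₂ — v₃ — v₄ — v₁ (as a subgraph, vertices distinct) with St(v₁) ≠ St(v₃) and St(v₂) ≠ St(v₄). -/
section Aux
variable {V : Type*} (G : SimpleGraph V)

lemma mem_starW {x : V} {W : Set V} : x ∈ starW G W ↔ ∀ w ∈ W, G.Adj x w := Iff.rfl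

lemma starW_anti {W W' : Set V} (h : W ⊆ W') : starW G W' ⊆ starW G W :=
  fun _ hx w hw => hx w (h hw)

lemma starW_union (A B : Set V) : starW G (A ∪ B) = starW G A ∩ starW G B := by
  ext x
  simp only [mem_starW, Set.mem_inter_iff, Set.mem_union]
  constructor
  · exact fun h => ⟨fun w hw => h w (Or.inl hw), fun w hw => h w (Or.inr hw)⟩
  · rintro ⟨h1, h2⟩ w (hw | hw)
    · exact h1 w hw
    · exact h2 w hw

lemma crk_bddAbove [Fintype V] :
    BddAbove {k | ∃ c : Fin (k + 1) → Set V, StrictAnti c ∧ ∀ i, c i ∈ flats G} := by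
  refine ⟨Nat.card (Set V), fun k hk => ?_⟩
  obtain ⟨c, hc, -⟩ := hk
  have hinj : Function.Injective c := hc.injective
  have h := Nat.card_le_card_of_injective c hinj
  rw [Nat.card_eq_fintype_card, Fintype.card_fin] at h
  omega

lemma four_le_crk_of_seq [Fintype V] (p q r s x1 x2 x3 x4 : V)
    (h1 : ¬G.Adj x1 p)
    (h2 : G.Adj x2 p) (h2' : ¬G.Adj x2 q)
    (h3 : G.Adj x3 p) (h3' : G.Adj x3 q) (h3'' : ¬G.Adj x3 r)
    (h4 : G.Adj x4 p) (h4' : G.Adj x4 q) (h4'' : G.Adj x4 r) (h4''' : ¬G.Adj x4 s) :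
    4 ≤ crk G := by
  have key : 4 ∈ {k | ∃ c : Fin (k + 1) → Set V, StrictAnti c ∧ ∀ i, c i ∈ flats G} := by
    refine ⟨![starW G ∅, starW G {p}, starW G {p, q}, starW G {p, q, r},
      starW G {p, q, r, s}], ?_, ?_⟩
    · rw [Fin.strictAnti_iff_succ_lt]
      intro i
      fin_cases i <;>
        simp only [Fin.succ, Fin.castSucc, Matrix.cons_val_zero, Matrix.cons_val_one,
          Matrix.head_cons, Fin.mk_one, Matrix.cons_val', Matrix.cons_val_fin_one,
          Matrix.empty_val', Fin.castAdd, Fin.castLE] <;>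
        rw [Set.lt_iff_ssubset, Set.ssubset_def]
      · refine ⟨starW_anti G (Set.empty_subset _), fun hsub => ?_⟩
        have hx : x1 ∈ starW G ∅ := fun w hw => absurd hw (Set.notMem_empty w)
        exact h1 ((hsub hx) p (Set.mem_singleton p))
      · refine ⟨starW_anti G (by intro z hz; simp at hz; simp [hz]), fun hsub => ?_⟩
        have hx : x2 ∈ starW G {p} := by
          intro w hw; rw [Set.mem_singleton_iff] at hw; subst hw; exact h2
        exact h2' ((hsub hx) q (by simp))
      · refine ⟨starW_anti G (by intro z hz; simp at hz; rcases hz with h|h <;> simp [h]),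
          fun hsub => ?_⟩
        have hx : x3 ∈ starW G {p, q} := by
          intro w hw; simp at hw; rcases hw with h|h <;> subst h
          · exact h3
          · exact h3'
        exact h3'' ((hsub hx) r (by simp))
      · refine ⟨starW_anti G (by intro z hz; simp at hz; rcases hz with h|h|h <;> simp [h]),
          fun hsub => ?_⟩
        have hx : x4 ∈ starW G {p, q, r} := by
          intro w hw; simp at hw; rcases hw with h|h|h <;> subst h
          · exact h4
          · exact h4'
          · exact h4''
        exact h4''' ((hsub hx) s (by simp))
    · intro i
      fin_cases i <;> exact ⟨_, rfl⟩
  exact le_csSup (crk_bddAbove G) key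

/-- Backward direction core: given the square (in any orientation) together with a
distinguishing vertex `a` for `w1, w3` and `b` for `w2, w4`. -/
lemma four_le_crk_main [Fintype V] (w1 w2 w3 w4 a b : V)
    (e21 : G.Adj w2 w1) (e23 : G.Adj w2 w3) (e41 : G.Adj w4 w1) (e43 : G.Adj w4 w3)
    (ha1 : G.Adj a w1) (ha3 : ¬G.Adj a w3) (hb2 : G.Adj b w2) (hb4 : ¬G.Adj b w4) :
    4 ≤ crk G :=
  four_le_crk_of_seq G w1 w3 b w2 w1 a w4 w2
    (G.irrefl) ha1 ha3 e41 e43 (fun h => hb4 h.symm) e21 e23 hb2.symm (G.irrefl)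

end Aux

/-- For a finite simple graph `G`: `c-rk G ≥ 4` iff `G` contains a 4-cycle
`v₁ — v₂ — v₃ — v₄ — v₁` (distinct vertices) with `St(v₁) ≠ St(v₃)` and
`St(v₂) ≠ St(v₄)`. -/
theorem crk_ge_four_iff_square {V : Type*} [Fintype V] (G : SimpleGraph V) :
    4 ≤ crk G ↔
      ∃ v₁ v₂ v₃ v₄ : V,
        v₁ ≠ v₂ ∧ v₁ ≠ v₃ ∧ v₁ ≠ v₄ ∧ v₂ ≠ v₃ ∧ v₂ ≠ v₄ ∧ v₃ ≠ v₄ ∧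
        G.Adj v₁ v₂ ∧ G.Adj v₂ v₃ ∧ G.Adj v₃ v₄ ∧ G.Adj v₄ v₁ ∧
        G.neighborSet v₁ ≠ G.neighborSet v₃ ∧ G.neighborSet v₂ ≠ G.neighborSet v₄ := by
  constructor
  · -- forward direction
    intro h
    have hbdd : BddAbove {k | ∃ c : Fin (k + 1) → Set V, StrictAnti c ∧ ∀ i, c i ∈ flats G} :=
      crk_bddAbove G
    have hne : {k | ∃ c : Fin (k + 1) → Set V, StrictAnti c ∧ ∀ i, c i ∈ flats G}.Nonempty := by
      refine ⟨0, fun _ => starW G ∅, ?_, fun _ => ⟨∅, rfl⟩⟩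
      intro i j hij
      have hi := i.isLt
      have hj := j.isLt
      rw [Fin.lt_def] at hij
      omega
    have hmem := Nat.sSup_mem hne hbdd
    have hk : 4 ≤ sSup {k | ∃ c : Fin (k + 1) → Set V, StrictAnti c ∧ ∀ i, c i ∈ flats G} := h
    set n := sSup {k | ∃ c : Fin (k + 1) → Set V, StrictAnti c ∧ ∀ i, c i ∈ flats G} with hn
    clear_value n
    clear hn h hne hbdd
    obtain ⟨c, hc, hflat⟩ := hmem
    -- indices 0..4
    let i0 : Fin (n + 1) := ⟨0, by omega⟩
    let i1 : Fin (n + 1) := ⟨1, by omega⟩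
    let i2 : Fin (n + 1) := ⟨2, by omega⟩
    let i3 : Fin (n + 1) := ⟨3, by omega⟩
    let i4 : Fin (n + 1) := ⟨4, by omega⟩
    have h01 : c i1 < c i0 := hc (show i0 < i1 by simp only [i0, i1, Fin.mk_lt_mk]; omega)
    have h12 : c i2 < c i1 := hc (show i1 < i2 by simp only [i1, i2, Fin.mk_lt_mk]; omega)
    have h23 : c i3 < c i2 := hc (show i2 < i3 by simp only [i2, i3, Fin.mk_lt_mk]; omega)
    have h34 : c i4 < c i3 := hc (show i3 < i4 by simp only [i3, i4, Fin.mk_lt_mk]; omega)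
    obtain ⟨P, hP⟩ := hflat i0
    obtain ⟨Q, hQ⟩ := hflat i1
    obtain ⟨R, hR⟩ := hflat i2
    obtain ⟨T, hT⟩ := hflat i3
    -- cumulative unions
    set Q' : Set V := P ∪ Q with hQ'
    set R' : Set V := Q' ∪ R with hR'
    set T' : Set V := R' ∪ T with hT'
    have hB : c i1 = starW G Q' := by
      rw [hQ', starW_union, ← hP, ← hQ]
      exact (Set.inter_eq_self_of_subset_right h01.le).symm
    have hC : c i2 = starW G R' := by
      rw [hR', starW_union, ← hB, ← hR]
      exact (Set.inter_eq_self_of_subset_right h12.le).symm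
    have hD : c i3 = starW G T' := by
      rw [hT', starW_union, ← hC, ← hT]
      exact (Set.inter_eq_self_of_subset_right h23.le).symm
    -- Q' is nonempty
    have hQne : Q'.Nonempty := by
      rw [Set.nonempty_iff_ne_empty]
      intro hemp
      have : c i1 = Set.univ := by
        rw [hB, hemp]
        ext x
        simp [mem_starW]
      have h0univ : c i0 = Set.univ := Set.eq_univ_of_subset h01.le (this)
      rw [this, h0univ] at h01
      exact lt_irrefl _ h01
    obtain ⟨w1, hw1⟩ := hQne
    -- witnesses
    obtain ⟨y1, hy1B, hy1C⟩ := Set.exists_of_ssubset h12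
    obtain ⟨y2, hy2C, hy2D⟩ := Set.exists_of_ssubset h23
    obtain ⟨y3, hy3D, -⟩ := Set.exists_of_ssubset h34
    -- extract adjacency data
    have hy1Q : ∀ w ∈ Q', G.Adj y1 w := by rw [hB] at hy1B; exact hy1B
    have hy2R : ∀ w ∈ R', G.Adj y2 w := by rw [hC] at hy2C; exact hy2C
    have hy3T : ∀ w ∈ T', G.Adj y3 w := by rw [hD] at hy3D; exact hy3D
    have hy1n : ∃ w ∈ R', ¬G.Adj y1 w := by
      rw [hC] at hy1C
      by_contra hcon
      push_neg at hcon
      exact hy1C hcon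
    have hy2n : ∃ w ∈ T', ¬G.Adj y2 w := by
      rw [hD] at hy2D
      by_contra hcon
      push_neg at hcon
      exact hy2D hcon
    obtain ⟨w2, hw2R, hw2n⟩ := hy1n
    obtain ⟨w3, hw3T, hw3n⟩ := hy2n
    have hw1R : w1 ∈ R' := Or.inl hw1
    have hw1T : w1 ∈ T' := Or.inl hw1R
    have hw2T : w2 ∈ T' := Or.inl hw2R
    -- adjacency facts
    have a11 : G.Adj y1 w1 := hy1Q w1 hw1
    have a21 : G.Adj y2 w1 := hy2R w1 hw1R
    have a22 : G.Adj y2 w2 := hy2R w2 hw2R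
    have a31 : G.Adj y3 w1 := hy3T w1 hw1T
    have a32 : G.Adj y3 w2 := hy3T w2 hw2T
    have a33 : G.Adj y3 w3 := hy3T w3 hw3T
    -- the square: v₁ = y3, v₂ = w2, v₃ = y2, v₄ = w1
    refine ⟨y3, w2, y2, w1, a32.ne, ?_, a31.ne, a22.ne', ?_, a21.ne, a32, a22.symm, a21, a31.symm,
      ?_, ?_⟩
    · -- y3 ≠ y2
      intro hEq
      exact hw3n (hEq ▸ a33)
    · -- w2 ≠ w1
      intro hEq
      exact hw2n (hEq ▸ a11)
    · -- neighborSet y3 ≠ neighborSet y2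
      intro hEq
      have : w3 ∈ G.neighborSet y3 := a33
      rw [hEq] at this
      exact hw3n this
    · -- neighborSet w2 ≠ neighborSet w1
      intro hEq
      have : y1 ∈ G.neighborSet w1 := a11.symm
      rw [← hEq] at this
      exact hw2n (SimpleGraph.Adj.symm this)
  · -- backward direction
    rintro ⟨v₁, v₂, v₃, v₄, -, -, -, -, -, -, e12, e23, e34, e41, hN13, hN24⟩
    -- get a distinguishing vertex for v₁, v₃
    have ha : ∃ a, (G.Adj a v₁ ∧ ¬G.Adj a v₃) ∨ (G.Adj a v₃ ∧ ¬G.Adj a v₁) := by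
      obtain ⟨u, hu⟩ := not_forall.mp (fun h => hN13 (Set.ext h))
      by_cases h1 : u ∈ G.neighborSet v₁
      · have h3 : u ∉ G.neighborSet v₃ := fun h3 => hu (iff_of_true h1 h3)
        exact ⟨u, Or.inl ⟨(SimpleGraph.mem_neighborSet _ _ _ |>.mp h1).symm,
          fun h => h3 (SimpleGraph.mem_neighborSet _ _ _ |>.mpr h.symm)⟩⟩
      · have h3 : u ∈ G.neighborSet v₃ := by
          by_contra h3
          exact hu (iff_of_false h1 h3)
        exact ⟨u, Or.inr ⟨(SimpleGraph.mem_neighborSet _ _ _ |>.mp h3).symm,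
          fun h => h1 (SimpleGraph.mem_neighborSet _ _ _ |>.mpr h.symm)⟩⟩
    have hb : ∃ b, (G.Adj b v₂ ∧ ¬G.Adj b v₄) ∨ (G.Adj b v₄ ∧ ¬G.Adj b v₂) := by
      obtain ⟨u, hu⟩ := not_forall.mp (fun h => hN24 (Set.ext h))
      by_cases h2 : u ∈ G.neighborSet v₂
      · have h4 : u ∉ G.neighborSet v₄ := fun h4 => hu (iff_of_true h2 h4)
        exact ⟨u, Or.inl ⟨(SimpleGraph.mem_neighborSet _ _ _ |>.mp h2).symm,
          fun h => h4 (SimpleGraph.mem_neighborSet _ _ _ |>.mpr h.symm)⟩⟩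
      · have h4 : u ∈ G.neighborSet v₄ := by
          by_contra h4
          exact hu (iff_of_false h2 h4)
        exact ⟨u, Or.inr ⟨(SimpleGraph.mem_neighborSet _ _ _ |>.mp h4).symm,
          fun h => h2 (SimpleGraph.mem_neighborSet _ _ _ |>.mpr h.symm)⟩⟩
    obtain ⟨a, ha⟩ := ha
    obtain ⟨b, hb⟩ := hb
    rcases ha with ⟨ha1, ha3⟩ | ⟨ha3, ha1⟩ <;> rcases hb with ⟨hb2, hb4⟩ | ⟨hb4, hb2⟩
    · exact four_le_crk_main G v₁ v₂ v₃ v₄ a b e12.symm e23 e41 e34.symm ha1 ha3 hb2 hb4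
    · exact four_le_crk_main G v₁ v₄ v₃ v₂ a b e41 e34.symm e12.symm e23 ha1 ha3 hb4 hb2
    · exact four_le_crk_main G v₃ v₂ v₁ v₄ a b e23 e12.symm e34.symm e41 ha3 ha1 hb2 hb4
    · exact four_le_crk_main G v₃ v₄ v₁ v₂ a b e34.symm e41 e23 e12.symm ha3 ha1 hb4 hb2
end
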